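/- arXiv:2209.10262 — 4 statements merged into one kernel-verified Lean document; each statement's English description precedes it below -/
import Mathlib

section
/- If a and b are assignments with a → b via an exchange between agents i and i′, and X ⊆ M is a stable set, then b⁻¹(X) = a⁻¹(X) = N_X. Consequently, for any reconfiguration sequence a₀ → a₁ → ⋯ → a_ℓ and any stable set X, a₀⁻¹(X) = a_ℓ⁻¹(X) = N_X. -/
/-- An assignment: a bijection where every agent accepts its item. -/
def IsAssignment {α β : Type*} (acc : β → Finset α) (a : α ≃ β) : Prop :=
  ∀ i : α, i ∈ acc (a i)

/-- A single rational exchange along an edge of G. -/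
def Exch {α β : Type*} (G : SimpleGraph α) (acc : β → Finset α) (a b : α ≃ β) : Prop :=
  IsAssignment acc a ∧ IsAssignment acc b ∧
    ∃ i i' : α, i ≠ i' ∧ G.Adj i i' ∧ a i = b i' ∧ a i' = b i ∧
      ∀ k : α, k ≠ i → k ≠ i' → a k = b k


lemma key_assignment {α β : Type*} [DecidableEq α] [DecidableEq β]
    (acc : β → Finset α) (X : Finset β)
    (hstable : (X.biUnion acc).card = X.card)
    (a : α ≃ β) (ha : IsAssignment acc a) : X.image a.symm = X.biUnion acc := by
  apply Finset.eq_of_subset_of_card_le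
  · intro i hi
    simp only [Finset.mem_image] at hi
    obtain ⟨j, hj, rfl⟩ := hi
    exact Finset.mem_biUnion.2 ⟨j, hj, by simpa using ha (a.symm j)⟩
  · rw [Finset.card_image_of_injective _ a.symm.injective, hstable]

/-- If a → b and X is stable, then b⁻¹(X) = a⁻¹(X) = N_X; consequently the
same holds along any reconfiguration sequence. -/
theorem stmt4 {α β : Type*} [Fintype α] [Fintype β] [DecidableEq α] [DecidableEq β]
    (G : SimpleGraph α) (acc : β → Finset α)
    (hcard : Fintype.card α = Fintype.card β)
    (X : Finset β) (hXne : X.Nonempty)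
    (hstable : (X.biUnion acc).card = X.card) :
    (∀ a b : α ≃ β, Exch G acc a b →
        X.image b.symm = X.biUnion acc ∧ X.image a.symm = X.biUnion acc) ∧
    (∀ a b : α ≃ β, IsAssignment acc a → Relation.ReflTransGen (Exch G acc) a b →
        X.image b.symm = X.biUnion acc ∧ X.image a.symm = X.biUnion acc) := by
  have key := key_assignment acc X hstable
  constructor
  · intro a b h
    exact ⟨key b h.2.1, key a h.1⟩
  · intro a b ha hrel
    have hb : IsAssignment acc b := by
      induction hrel with
      | refl => exact ha
      | tail _ h _ => exact h.2.1
    exact ⟨key b hb, key a ha⟩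
end

section
/- For any reconfiguration sequence of assignments a₀ → a₁ → ⋯ → a_ℓ and any item j ∈ M, the agents a₀⁻¹(j), a₁⁻¹(j), ..., a_ℓ⁻¹(j) all lie in the same connected component of the induced subgraph G[N_j]. -/
lemma step_reach {α β : Type*} (G : SimpleGraph α) (acc : β → Finset α)
    (a b : α ≃ β) (h : Exch G acc a b) (j : β)
    (hja : a.symm j ∈ acc j) (hjb : b.symm j ∈ acc j) :
    (G.induce {i : α | i ∈ acc j}).Reachable ⟨a.symm j, hja⟩ ⟨b.symm j, hjb⟩ := by
  obtain ⟨ha, hb, i, i', hne, hadj, h1, h2, hoth⟩ := h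
  by_cases hi : a i = j
  · have hi' : b i' = j := h1 ▸ hi
    have e1 : a.symm j = i := by rw [← hi]; simp
    have e2 : b.symm j = i' := by rw [← hi']; simp
    apply SimpleGraph.Adj.reachable
    change G.Adj (a.symm j) (b.symm j)
    rw [e1, e2]; exact hadj
  · by_cases hi' : a i' = j
    · have hbj : b i = j := h2 ▸ hi'
      have e1 : a.symm j = i' := by rw [← hi']; simp
      have e2 : b.symm j = i := by rw [← hbj]; simp
      apply SimpleGraph.Adj.reachable
      change G.Adj (a.symm j) (b.symm j)
      rw [e1, e2]; exact hadj.symm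
    · have hk1 : a.symm j ≠ i := fun h => hi (by rw [← h]; simp)
      have hk2 : a.symm j ≠ i' := fun h => hi' (by rw [← h]; simp)
      have : b (a.symm j) = j := by rw [← hoth _ hk1 hk2]; simp
      have e : a.symm j = b.symm j := ((Equiv.symm_apply_eq b).mpr this.symm).symm
      have e' : (⟨a.symm j, hja⟩ : {i : α // i ∈ {i : α | i ∈ acc j}}) = ⟨b.symm j, hjb⟩ :=
        Subtype.ext e
      rw [e']

/-- Along any reconfiguration sequence, for each item j the successive
holders of j all lie in the same connected component of the induced subgraph G[N_j]. -/
theorem stmt9 {α β : Type*} [Fintype α] [Fintype β] [DecidableEq α] [DecidableEq β]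
    (G : SimpleGraph α) (acc : β → Finset α)
    (hcard : Fintype.card α = Fintype.card β)
    (a b : α ≃ β) (ha : IsAssignment acc a) (hb : IsAssignment acc b)
    (hreach : Relation.ReflTransGen (Exch G acc) a b) (j : β) :
    (G.induce {i : α | i ∈ acc j}).Reachable
      ⟨a.symm j, by simpa using ha (a.symm j)⟩
      ⟨b.symm j, by simpa using hb (b.symm j)⟩ := by
  induction hreach with
  | refl => exact SimpleGraph.Reachable.refl _
  | @tail c d h1 h2 ih =>
      have hc : IsAssignment acc c := h2.1
      have hd : IsAssignment acc d := h2.2.1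
      exact (ih hc).trans (step_reach G acc c d h2 j
        (by simpa using hc (c.symm j)) (by simpa using hd (d.symm j)))
end

section
/- Suppose |N_X| ≥ |X| + 1 for every nonempty proper subset X ⊊ M, |N_M| = |N| = |M|, and X ⊆ M is an inclusionwise-minimal set satisfying |N_X| = |X| + 1 and N_X ≠ N. If every induced subgraph G[N_j] is connected in a tree G, then G[N_X] is connected. -/
/-- If there is no proper stable subset, X is inclusionwise-minimal with
|N_X| = |X| + 1 and N_X ≠ N, G is a tree, and every G[N_j] is connected, then G[N_X]
is connected. -/
theorem stmt10 {α β : Type*} [Fintype α] [Fintype β] [DecidableEq α] [DecidableEq β]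
    (G : SimpleGraph α) (acc : β → Finset α)
    (hcard : Fintype.card α = Fintype.card β)
    (htree : G.IsTree)
    (hconn : ∀ j : β, (G.induce {i : α | i ∈ acc j}).Connected)
    (hfull : Finset.univ.biUnion acc = (Finset.univ : Finset α))
    (hnostable : ∀ X : Finset β, X.Nonempty → X ≠ Finset.univ →
      X.card + 1 ≤ (X.biUnion acc).card)
    (X : Finset β)
    (hX : (X.biUnion acc).card = X.card + 1)
    (hXne : X.biUnion acc ≠ Finset.univ)
    (hmin : ∀ X' : Finset β, (X'.biUnion acc).card = X'.card + 1 →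
      X'.biUnion acc ≠ Finset.univ → ¬ X' ⊂ X) :
    (G.induce {i : α | i ∈ X.biUnion acc}).Connected := by
  classical
  set S : Finset α := X.biUnion acc with hS
  set H := G.induce {i : α | i ∈ S} with hH
  have hXnonempty : X.Nonempty := by
    rcases X.eq_empty_or_nonempty with h | h
    · exfalso
      have h0 : S.card = 0 := by rw [hS, h]; simp
      omega
    · exact h
  have hXuniv : X ≠ Finset.univ := by
    intro h; exact hXne (by rw [hS, h, hfull])
  have haccne : ∀ j : β, (acc j).Nonempty := by
    intro j
    obtain ⟨⟨a, ha⟩⟩ := (hconn j).nonempty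
    exact ⟨a, ha⟩
  have hmemS : ∀ {j : β}, j ∈ X → ∀ {a : α}, a ∈ acc j → a ∈ S := by
    intro j hj a ha
    exact Finset.mem_biUnion.mpr ⟨j, hj, ha⟩
  -- key: all vertices of acc j (j ∈ X) are mutually reachable in H
  have hkey : ∀ {j : β} (hj : j ∈ X) {a b : α} (ha : a ∈ acc j) (hb : b ∈ acc j),
      H.Reachable ⟨a, hmemS hj ha⟩ ⟨b, hmemS hj hb⟩ := by
    intro j hj a b ha hb
    let f : (G.induce {i : α | i ∈ acc j}) →g H :=
      { toFun := fun x => ⟨x.1, hmemS hj x.2⟩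
        map_rel' := fun h => h }
    exact ((hconn j).preconnected ⟨a, ha⟩ ⟨b, hb⟩).map f
  have hSne : Nonempty {i : α | i ∈ S} := by
    obtain ⟨j, hj⟩ := hXnonempty
    obtain ⟨a, ha⟩ := haccne j
    exact ⟨⟨a, hmemS hj ha⟩⟩
  rw [SimpleGraph.connected_iff]
  refine ⟨?_, hSne⟩
  intro u v
  by_contra hreach
  obtain ⟨u, hu⟩ := u
  obtain ⟨v, hv⟩ := v
  -- Y : items with some vertex reachable from u
  set Y : Finset β := X.filter
    (fun j => ∃ a, ∃ ha : a ∈ acc j, ∃ hj : j ∈ X,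
      H.Reachable ⟨u, hu⟩ ⟨a, hmemS hj ha⟩) with hY
  have hYX : Y ⊆ X := Finset.filter_subset _ _
  -- if j ∈ Y then every vertex of acc j is reachable from u
  have hYall : ∀ {j : β} (hjY : j ∈ Y) {a : α} (ha : a ∈ acc j),
      H.Reachable ⟨u, hu⟩ ⟨a, hmemS (hYX hjY) ha⟩ := by
    intro j hjY a ha
    obtain ⟨hjX, b, hb, hjX', hrb⟩ := Finset.mem_filter.mp hjY
    exact hrb.trans (hkey hjX' hb ha)
  -- Y is nonempty
  have hYne : Y.Nonempty := by
    have := hu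
    rw [Set.mem_setOf_eq, hS, Finset.mem_biUnion] at this
    obtain ⟨j, hj, hja⟩ := this
    exact ⟨j, Finset.mem_filter.mpr ⟨hj, u, hja, hj, SimpleGraph.Reachable.refl _⟩⟩
  -- X \ Y is nonempty
  have hXYne : (X \ Y).Nonempty := by
    have := hv
    rw [Set.mem_setOf_eq, hS, Finset.mem_biUnion] at this
    obtain ⟨j, hj, hja⟩ := this
    refine ⟨j, Finset.mem_sdiff.mpr ⟨hj, fun hjY => ?_⟩⟩
    exact hreach (hYall hjY hja)
  -- neither is univ
  have hYuniv : Y ≠ Finset.univ := by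
    intro h
    exact hXuniv (Finset.univ_subset_iff.mp (h ▸ hYX))
  have hXYuniv : X \ Y ≠ Finset.univ := by
    intro h
    exact hXuniv (Finset.univ_subset_iff.mp (h ▸ Finset.sdiff_subset))
  -- the two biUnions are disjoint
  have hdisj : Disjoint (Y.biUnion acc) ((X \ Y).biUnion acc) := by
    rw [Finset.disjoint_left]
    intro a haY haXY
    obtain ⟨j, hj, hja⟩ := Finset.mem_biUnion.mp haY
    obtain ⟨j', hj', hja'⟩ := Finset.mem_biUnion.mp haXY
    obtain ⟨hj'X, hj'Y⟩ := Finset.mem_sdiff.mp hj'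
    apply hj'Y
    refine Finset.mem_filter.mpr ⟨hj'X, a, hja', hj'X, ?_⟩
    exact hYall hj hja
  -- union is S
  have hunion : Y.biUnion acc ∪ (X \ Y).biUnion acc = S := by
    ext a
    simp only [Finset.mem_union, Finset.mem_biUnion, Finset.mem_sdiff, hS]
    constructor
    · rintro (⟨j, hj, hja⟩ | ⟨j, ⟨hj, _⟩, hja⟩)
      · exact ⟨j, hYX hj, hja⟩
      · exact ⟨j, hj, hja⟩
    · rintro ⟨j, hj, hja⟩
      by_cases hjY : j ∈ Y
      · exact Or.inl ⟨j, hjY, hja⟩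
      · exact Or.inr ⟨j, ⟨hj, hjY⟩, hja⟩
  -- cardinality contradiction
  have h1 : Y.card + 1 ≤ (Y.biUnion acc).card := hnostable Y hYne hYuniv
  have h2 : (X \ Y).card + 1 ≤ ((X \ Y).biUnion acc).card := hnostable _ hXYne hXYuniv
  have hcards : (Y.biUnion acc).card + ((X \ Y).biUnion acc).card = S.card := by
    rw [← Finset.card_union_of_disjoint hdisj, hunion]
  have hXcard : Y.card + (X \ Y).card = X.card := by
    have := Finset.card_sdiff_add_card_eq_card hYX
    omega
  have : S.card = X.card + 1 := hX
  omega
end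

section
/- Let G be a tree and X ⊆ M a proper stable subset such that G[N_X] is connected. Let N¹ be the vertex set of a connected component of G − N_X, and let M¹ = a(N¹) for an assignment a. If there exists an item j ∈ M¹ with b⁻¹(j) ∉ N¹ for another assignment b, then a cannot be reconfigured to b. -/
/-- In any assignment, an agent of N_X receives an item of X. -/
lemma key_mem {α β : Type*} [DecidableEq α] [DecidableEq β]
    (acc : β → Finset α) (X : Finset β)
    (hstable : (X.biUnion acc).card = X.card)
    (c : α ≃ β) (hc : IsAssignment acc c)
    {i : α} (hi : i ∈ X.biUnion acc) : c i ∈ X := by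
  have hsub : X.image c.symm ⊆ X.biUnion acc := by
    intro i' hi'
    obtain ⟨jx, hjx, rfl⟩ := Finset.mem_image.1 hi'
    have h := hc (c.symm jx)
    rw [Equiv.apply_symm_apply] at h
    exact Finset.mem_biUnion.2 ⟨jx, hjx, h⟩
  have hcardeq : (X.image c.symm).card = (X.biUnion acc).card := by
    rw [Finset.card_image_of_injective _ c.symm.injective, hstable]
  have heq : X.image c.symm = X.biUnion acc :=
    Finset.eq_of_subset_of_card_le hsub (le_of_eq hcardeq.symm)
  rw [← heq] at hi
  obtain ⟨jx, hjx, hji⟩ := Finset.mem_image.1 hi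
  rw [← hji, Equiv.apply_symm_apply]; exact hjx

/-- One exchange step preserves the set of items held by N1. -/
lemma step_invar {α β : Type*} [DecidableEq α] [DecidableEq β]
    (G : SimpleGraph α) (acc : β → Finset α) (X : Finset β)
    (hstable : (X.biUnion acc).card = X.card)
    (N1 : Finset α)
    (hN1disj : ∀ i ∈ N1, i ∉ X.biUnion acc)
    (hN1max : ∀ i ∈ N1, ∀ i' : α, G.Adj i i' → i' ∈ N1 ∨ i' ∈ X.biUnion acc)
    (c d : α ≃ β) (hex : Exch G acc c d) : N1.image d = N1.image c := by
  obtain ⟨hc, hd, i, i', hne, hadj, h1, h2, h3⟩ := hex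
  -- cross-boundary swap is impossible
  have cross : ∀ p q : α, p ∈ N1 → q ∉ N1 → G.Adj p q → c p = d q → False := by
    intro p q hp hq hadj' heq
    rcases hN1max p hp q hadj' with h | h
    · exact hq h
    · have hdq : d q ∈ X := key_mem acc X hstable d hd h
      rw [← heq] at hdq
      exact hN1disj p hp (Finset.mem_biUnion.2 ⟨c p, hdq, hc p⟩)
  by_cases hi : i ∈ N1 <;> by_cases hi' : i' ∈ N1
  · -- both inside: swapped values within N1, same image
    apply Finset.Subset.antisymm
    · intro x hx
      obtain ⟨k, hk, rfl⟩ := Finset.mem_image.1 hx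
      by_cases e1 : k = i
      · exact Finset.mem_image.2 ⟨i', hi', by rw [h2, e1]⟩
      by_cases e2 : k = i'
      · exact Finset.mem_image.2 ⟨i, hi, by rw [h1, e2]⟩
      · exact Finset.mem_image.2 ⟨k, hk, h3 k e1 e2⟩
    · intro x hx
      obtain ⟨k, hk, rfl⟩ := Finset.mem_image.1 hx
      by_cases e1 : k = i
      · exact Finset.mem_image.2 ⟨i', hi', by rw [← h1, e1]⟩
      by_cases e2 : k = i'
      · exact Finset.mem_image.2 ⟨i, hi, by rw [← h2, e2]⟩
      · exact Finset.mem_image.2 ⟨k, hk, (h3 k e1 e2).symm⟩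
  · exact absurd (cross i i' hi hi' hadj h1) (fun h => h)
  · exact absurd (cross i' i hi' hi hadj.symm h2) (fun h => h)
  · -- both outside: d = c on N1
    apply Finset.image_congr
    intro k hk
    exact (h3 k (fun e => hi (e ▸ hk)) (fun e => hi' (e ▸ hk))).symm

/-- If X is a proper stable subset with G[N_X] connected in a tree G, N¹
is (the vertex set of) a connected component of G − N_X, M¹ = a(N¹), and some item
j ∈ M¹ satisfies b⁻¹(j) ∉ N¹, then a cannot be reconfigured to b. -/
theorem stmt12 {α β : Type*} [Fintype α] [Fintype β] [DecidableEq α] [DecidableEq β]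
    (G : SimpleGraph α) (acc : β → Finset α)
    (hcard : Fintype.card α = Fintype.card β)
    (htree : G.IsTree)
    (hconnj : ∀ j : β, (G.induce {i : α | i ∈ acc j}).Connected)
    (X : Finset β) (hXne : X.Nonempty) (hXproper : X ≠ Finset.univ)
    (hstable : (X.biUnion acc).card = X.card)
    (hconnX : (G.induce {i : α | i ∈ X.biUnion acc}).Connected)
    (N1 : Finset α)
    (hN1disj : ∀ i ∈ N1, i ∉ X.biUnion acc)
    (hN1conn : (G.induce {i : α | i ∈ N1}).Connected)
    (hN1max : ∀ i ∈ N1, ∀ i' : α, G.Adj i i' → i' ∈ N1 ∨ i' ∈ X.biUnion acc)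
    (a b : α ≃ β) (ha : IsAssignment acc a) (hb : IsAssignment acc b)
    (j : β) (hj : j ∈ N1.image a) (hbj : b.symm j ∉ N1) :
    ¬ Relation.ReflTransGen (Exch G acc) a b := by
  intro hreach
  have hinv : ∀ c : α ≃ β, Relation.ReflTransGen (Exch G acc) a c →
      N1.image c = N1.image a := by
    intro c hc
    induction hc with
    | refl => rfl
    | tail _ hex ih =>
      rw [step_invar G acc X hstable N1 hN1disj hN1max _ _ hex, ih]
  have hjb : j ∈ N1.image b := (hinv b hreach).symm ▸ hj
  obtain ⟨k, hk, hkj⟩ := Finset.mem_image.1 hjb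
  exact hbj (by rw [← hkj, Equiv.symm_apply_apply]; exact hk)
end
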